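/- Let a_s, b_s, a_p, b_p > 0 and P > 0, and let X and Y be independent real random variables with X having the Gamma distribution with shape a_s and scale b_s, and Y having the Gamma distribution with shape a_p and scale b_p. Then the estimated data rate Ĉ = log₂(1 + P·X/Y) is integrable: E[log₂(1 + P·X/Y)] < ∞. (This guarantees that the expected secondary throughput R_s(τ) in equation (19) of the paper is well defined and finite.) -/

import Mathlib

open MeasureTheory ProbabilityTheory Real Set
open scoped NNReal ENNReal

/-- The Gamma distribution with shape `a > 0` and scale `b > 0`:
the measure on `ℝ` with density `x ↦ x^(a-1) * exp (-x/b) / (Γ a * b^a)` on `(0, ∞)`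
and `0` elsewhere. -/
noncomputable def gammaScaleMeasure (a b : ℝ) : Measure ℝ :=
  volume.withDensity fun x =>
    ENNReal.ofReal (if 0 < x then x ^ (a - 1) * Real.exp (-(x / b)) / (Real.Gamma a * b ^ a) else 0)

/-! Writing `1 + P x / y = (y + P x) * y⁻¹` and using `log t ≤ t - 1` and
`log y⁻¹ ≤ y ^ (-ε) / ε` gives `log (1 + P x / y) ≤ P x + y + y ^ (-ε) / ε`. A Gamma variable of
shape `a` has finite moments `E[X ^ s]` for every `s > -a`, so with `ε = a_p / 2` every term on the
right is integrable. -/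

noncomputable def gammaScalePDFReal (a b x : ℝ) : ℝ :=
  if 0 < x then x ^ (a - 1) * exp (-(x / b)) / (Gamma a * b ^ a) else 0

lemma gammaScaleMeasure_eq_withDensity (a b : ℝ) :
    gammaScaleMeasure a b =
      volume.withDensity fun x => ENNReal.ofReal (gammaScalePDFReal a b x) :=
  rfl

@[fun_prop]
lemma measurable_gammaScalePDFReal (a b : ℝ) : Measurable (gammaScalePDFReal a b) :=
  Measurable.ite measurableSet_Ioi (by fun_prop) measurable_const

lemma gammaScaleMeasure_eq_gammaMeasure (a : ℝ) {b : ℝ} (hb : 0 < b) :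
    gammaScaleMeasure a b = gammaMeasure a b⁻¹ := by
  rw [gammaScaleMeasure_eq_withDensity, gammaMeasure]
  refine withDensity_congr_ae ?_
  filter_upwards [compl_mem_ae_iff.mpr (measure_singleton (0 : ℝ))] with x hx
  rcases lt_or_gt_of_ne hx with hx | hx
  · rw [gammaPDF_of_neg hx, gammaScalePDFReal, if_neg hx.not_gt, ENNReal.ofReal_zero]
  · rw [gammaPDF_of_nonneg hx.le, gammaScalePDFReal, if_pos hx, inv_rpow hb.le, ← div_eq_inv_mul]
    congr 1
    field_simp

lemma isProbabilityMeasure_gammaScaleMeasure {a b : ℝ} (ha : 0 < a) (hb : 0 < b) :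
    IsProbabilityMeasure (gammaScaleMeasure a b) := by
  rw [gammaScaleMeasure_eq_gammaMeasure a hb]
  exact isProbabilityMeasure_gammaMeasure ha (inv_pos.2 hb)

lemma ae_pos_gammaScaleMeasure (a b : ℝ) : ∀ᵐ x ∂gammaScaleMeasure a b, 0 < x := by
  rw [gammaScaleMeasure_eq_withDensity, ae_withDensity_iff (by fun_prop)]
  refine ae_of_all _ fun x hx => ?_
  by_contra h
  simp [gammaScalePDFReal, h] at hx

lemma integrable_rpow_gammaScaleMeasure {a b s : ℝ} (ha : 0 < a) (hb : 0 < b) (hs : 0 < a + s) :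
    Integrable (fun x => x ^ s) (gammaScaleMeasure a b) := by
  have hpdf : ∀ x : ℝ, x ^ s * (ENNReal.ofReal (gammaScalePDFReal a b x)).toReal =
      (Ioi 0).indicator
        (fun x => (Gamma a * b ^ a)⁻¹ * (x ^ (a + s - 1) * exp (-b⁻¹ * x ^ (1 : ℝ)))) x := by
    intro x
    by_cases hx : 0 < x
    · have := Gamma_pos_of_pos ha
      rw [gammaScalePDFReal, if_pos hx, indicator_of_mem (mem_Ioi.2 hx), ENNReal.toReal_ofReal (by positivity),
        show a + s - 1 = s + (a - 1) by ring, rpow_add hx, rpow_one]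
      field_simp
    · rw [gammaScalePDFReal, if_neg hx, indicator_of_notMem (notMem_Ioi.2 (not_lt.1 hx))]
      simp
  rw [gammaScaleMeasure_eq_withDensity,
    integrable_withDensity_iff (by fun_prop) (ae_of_all _ fun _ => ENNReal.ofReal_lt_top),
    funext hpdf, integrable_indicator_iff measurableSet_Ioi]
  exact (integrableOn_rpow_mul_exp_neg_mul_rpow (by linarith) one_pos (inv_pos.2 hb)).const_mul _

section RandomVariable

variable {Ω : Type*} [MeasurableSpace Ω] {μ : Measure Ω} {X : Ω → ℝ} {a b : ℝ}

lemma aemeasurable_of_map_eq_gammaScaleMeasure (ha : 0 < a) (hb : 0 < b)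
    (hX : μ.map X = gammaScaleMeasure a b) : AEMeasurable X μ := by
  have := isProbabilityMeasure_gammaScaleMeasure ha hb
  exact aemeasurable_of_map_neZero (hX ▸ inferInstance)

lemma ae_pos_of_map_eq_gammaScaleMeasure (ha : 0 < a) (hb : 0 < b)
    (hX : μ.map X = gammaScaleMeasure a b) : ∀ᵐ ω ∂μ, 0 < X ω :=
  ae_of_ae_map (aemeasurable_of_map_eq_gammaScaleMeasure ha hb hX)
    (hX ▸ ae_pos_gammaScaleMeasure a b)

lemma integrable_rpow_of_map_eq_gammaScaleMeasure {s : ℝ} (ha : 0 < a) (hb : 0 < b)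
    (hs : 0 < a + s) (hX : μ.map X = gammaScaleMeasure a b) :
    Integrable (fun ω => X ω ^ s) μ :=
  (integrable_map_measure (by fun_prop : Measurable fun x : ℝ => x ^ s).aestronglyMeasurable
    (aemeasurable_of_map_eq_gammaScaleMeasure ha hb hX)).1
    (hX ▸ integrable_rpow_gammaScaleMeasure ha hb hs)

end RandomVariable

lemma log_one_add_div_le {x y ε : ℝ} (hx : 0 ≤ x) (hy : 0 < y) (hε : 0 < ε) :
    log (1 + x / y) ≤ x + y + y ^ (-ε) / ε := by
  have hsplit : log (1 + x / y) = log (y + x) + log y⁻¹ := by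
    rw [← log_mul (by positivity) (by positivity)]
    congr 1
    field_simp
  have hlog : log (y + x) ≤ y + x - 1 := log_le_sub_one_of_pos (by positivity)
  have hlog_inv : log y⁻¹ ≤ y ^ (-ε) / ε := by
    simpa [inv_rpow hy.le, ← rpow_neg hy.le] using log_le_rpow_div (inv_nonneg.2 hy.le) hε
  linarith

theorem estimated_rate_integrable_general {Ω : Type*} [MeasurableSpace Ω] (μ : Measure Ω)
    (as bs ap bp P : ℝ)
    (has : 0 < as) (hbs : 0 < bs) (hap : 0 < ap) (hbp : 0 < bp) (hP : 0 < P)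
    (X Y : Ω → ℝ)
    (hX : Measure.map X μ = gammaScaleMeasure as bs)
    (hY : Measure.map Y μ = gammaScaleMeasure ap bp) :
    Integrable (fun ω => Real.logb 2 (1 + P * X ω / Y ω)) μ := by
  have hXm := aemeasurable_of_map_eq_gammaScaleMeasure has hbs hX
  have hYm := aemeasurable_of_map_eq_gammaScaleMeasure hap hbp hY
  have hXint : Integrable X μ := by
    simpa using integrable_rpow_of_map_eq_gammaScaleMeasure has hbs (s := 1) (by linarith) hX
  have hYint : Integrable Y μ := by
    simpa using integrable_rpow_of_map_eq_gammaScaleMeasure hap hbp (s := 1) (by linarith) hY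
  have hYneg : Integrable (fun ω => Y ω ^ (-(ap / 2))) μ :=
    integrable_rpow_of_map_eq_gammaScaleMeasure hap hbp (by linarith) hY
  have hbound : Integrable (fun ω => (P * X ω + Y ω + Y ω ^ (-(ap / 2)) / (ap / 2)) / log 2) μ :=
    (((hXint.const_mul P).add hYint).add (hYneg.div_const _)).div_const _
  refine hbound.mono' ?_ ?_
  · exact ((measurable_log.comp_aemeasurable (by fun_prop)).div_const _).aestronglyMeasurable
  filter_upwards [ae_pos_of_map_eq_gammaScaleMeasure has hbs hX,
    ae_pos_of_map_eq_gammaScaleMeasure hap hbp hY] with ω hx hy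
  have hlogb_nonneg : 0 ≤ logb 2 (1 + P * X ω / Y ω) :=
    logb_nonneg one_lt_two (le_add_of_nonneg_right (by positivity))
  rw [norm_of_nonneg hlogb_nonneg, logb]
  exact div_le_div_of_nonneg_right
    (log_one_add_div_le (mul_pos hP hx).le hy (half_pos hap)) (log_pos one_lt_two).le

/-- Let `X` and `Y` be independent with `X` Gamma (shape `a_s`, scale `b_s`)
and `Y` Gamma (shape `a_p`, scale `b_p`), and `P > 0`. Then the estimated data rate
`Ĉ = log₂ (1 + P X / Y)` is integrable: `E[log₂ (1 + P X / Y)] < ∞`. -/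
theorem estimated_rate_integrable {Ω : Type*} [MeasurableSpace Ω] (μ : Measure Ω)
    [IsProbabilityMeasure μ] (as bs ap bp P : ℝ)
    (has : 0 < as) (hbs : 0 < bs) (hap : 0 < ap) (hbp : 0 < bp) (hP : 0 < P)
    (X Y : Ω → ℝ) (hindep : IndepFun X Y μ)
    (hX : Measure.map X μ = gammaScaleMeasure as bs)
    (hY : Measure.map Y μ = gammaScaleMeasure ap bp) :
    Integrable (fun ω => Real.logb 2 (1 + P * X ω / Y ω)) μ :=
  estimated_rate_integrable_general μ as bs ap bp P has hbs hap hbp hP X Y hX hY
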